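/- Let G be the 2 × 4 grid graph, i.e., the Cartesian product of a path on 2 vertices with a path on 4 vertices (a bipartite outerplanar graph on 8 vertices). Then s(G) = 3: two cops do not suffice to surround the robber on G, while three cops do. -/

import Mathlib

/-!
Three cops start on `(0,0)`, `(0,2)` and `(1,2)`; wherever the robber is then placed, a single
cop move surrounds him. Against two cops the robber stays on the four inner vertices (columns
`1` and `2`): they have degree `3`, so two cops never surround him there, and they form a
`4`-cycle, so two cops never occupy all three vertices he may move to inside it.
-/

def stepRel {V : Type*} (G : SimpleGraph V) (x y : V) : Prop := x = y ∨ G.Adj x y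

/-- `histList r t = [r 0, r 1, …, r (t-1)]`: the robber's first `t` positions. -/
def histList {V : Type*} (r : ℕ → V) (t : ℕ) : List V := (List.range t).map r

/-- A cop strategy for `m` cops is a function `F` assigning to each finite history of
robber positions the current positions of the cops; `F []` is the initial placement,
made before the robber is placed, and `F (h ++ [x])` is the cops' answer after the
robber history `h` has been extended by the robber move `x`.  The strategy is valid
if each cop always moves along an edge or stays put. -/
def ValidCopStrategy {V : Type*} (G : SimpleGraph V) {m : ℕ}
    (F : List V → Fin m → V) : Prop :=
  ∀ (h : List V) (x : V) (i : Fin m), stepRel G (F h i) (F (h ++ [x]) i)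

/-- An infinite robber play `r` against the cop strategy `F` is legal if the robber
always moves along an edge or stays put, and never ends a turn on a vertex occupied
by a cop (`r 0` is the robber's initial placement, chosen after the cops have been
placed at `F []`, and `r t` is chosen when the cops stand at `F (histList r t)`). -/
def LegalPlay {V : Type*} (G : SimpleGraph V) {m : ℕ}
    (F : List V → Fin m → V) (r : ℕ → V) : Prop :=
  (∀ t, stepRel G (r t) (r (t + 1))) ∧ ∀ t, ∀ i, F (histList r t) i ≠ r t

/-- The robber is surrounded at time `t`: after the cops' move in round `t + 1`,
every neighbor of the robber's position `r t` is occupied by a cop. -/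
def SurroundedAt {V : Type*} (G : SimpleGraph V) {m : ℕ}
    (F : List V → Fin m → V) (r : ℕ → V) (t : ℕ) : Prop :=
  ∀ w, G.Adj (r t) w → ∃ i, F (histList r (t + 1)) i = w

/-- `m` cops have a winning strategy in the game of Surrounding Cops and Robbers
on `G`; equivalently, the surrounding cop number satisfies `s(G) ≤ m`. -/
def CopsWin {V : Type*} (G : SimpleGraph V) (m : ℕ) : Prop :=
  ∃ F : List V → Fin m → V, ValidCopStrategy G F ∧
    ∀ r : ℕ → V, LegalPlay G F r → ∃ t, SurroundedAt G F r t

open SimpleGraph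

instance SimpleGraph.pathGraph.instDecidableRelAdj (n : ℕ) : DecidableRel (pathGraph n).Adj :=
  fun _ _ => decidable_of_iff _ pathGraph_adj.symm

instance SimpleGraph.boxProd.instDecidableRelAdj {α β : Type*} [DecidableEq α] [DecidableEq β]
    (G : SimpleGraph α) (H : SimpleGraph β) [DecidableRel G.Adj] [DecidableRel H.Adj] :
    DecidableRel (G □ H).Adj :=
  fun _ _ => decidable_of_iff _ boxProd_adj.symm

instance {V : Type*} [DecidableEq V] (G : SimpleGraph V) [DecidableRel G.Adj] :
    DecidableRel (stepRel G) :=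
  fun _ _ => inferInstanceAs (Decidable (_ ∨ _))

section

variable {V : Type*} {G : SimpleGraph V} {m : ℕ}

theorem copsWin_of_surround_in_one_round (c : Fin m → V)
    (h : ∀ v, (∀ i, c i ≠ v) → ∃ c' : Fin m → V,
      (∀ i, stepRel G (c i) (c' i)) ∧ ∀ w, G.Adj v w → ∃ i, c' i = w) :
    CopsWin G m := by
  classical
  choose reply hreply_step hreply_surround using h
  refine ⟨fun | [] => c | v :: _ => if hv : ∀ i, c i ≠ v then reply v hv else c, ?_,
    fun r hr => ⟨0, ?_⟩⟩
  · rintro (_ | ⟨v, _⟩) x i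
    · dsimp only [List.nil_append]
      split_ifs with hx
      · exact hreply_step x hx i
      · exact Or.inl rfl
    · exact Or.inl rfl
  · have hr₀ : ∀ i, c i ≠ r 0 := hr.2 0
    show ∀ w, G.Adj (r 0) w → ∃ i, (if hv : ∀ i, c i ≠ r 0 then reply (r 0) hv else c) i = w
    rw [dif_pos hr₀]
    exact hreply_surround (r 0) hr₀

theorem exists_mem_forall_ne_of_lt_ncard {s : Set V} (c : Fin m → V) (hs : m < s.ncard) :
    ∃ v ∈ s, ∀ i, c i ≠ v := by
  have hc : (Set.range c).ncard < s.ncard := by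
    calc (Set.range c).ncard ≤ (Set.univ : Set (Fin m)).ncard := by
          rw [← Set.image_univ]; exact Set.ncard_image_le
      _ = m := by simp
      _ < s.ncard := hs
  obtain ⟨v, hv, hvc⟩ := Set.exists_mem_notMem_of_ncard_lt_ncard hc
  exact ⟨v, hv, fun i hi => hvc ⟨i, hi⟩⟩

theorem histList_succ (r : ℕ → V) (t : ℕ) : histList r (t + 1) = histList r t ++ [r t] := by
  simp [histList, List.range_succ]

theorem not_copsWin_of_evasion (S : Set V) (hS : S.Nonempty)
    (hescape : ∀ c : Fin m → V, ∀ v ∈ S, ∃ v' ∈ S, stepRel G v v' ∧ ∀ i, c i ≠ v')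
    (hfree : ∀ c : Fin m → V, ∀ v ∈ S, ∃ w, G.Adj v w ∧ ∀ i, c i ≠ w) :
    ¬ CopsWin G m := by
  rintro ⟨F, -, hwin⟩
  choose! next hnext_mem hnext_step hnext_ne using hescape
  obtain ⟨v₀, hv₀⟩ := hS
  -- Before any move the robber "stands" on `v₀`, so his placement is itself an escape from `F []`.
  let robber (h : List V) : V := next (F h) (h.getLast?.getD v₀)
  let hist (t : ℕ) : List V := Nat.rec [] (fun _ h => h ++ [robber h]) t
  let r (t : ℕ) : V := robber (hist t)
  have hhist : ∀ t, histList r t = hist t := by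
    intro t
    induction t with
    | zero => rfl
    | succ t ih => rw [histList_succ, ih]
  have hr_succ : ∀ t, r (t + 1) = next (F (hist (t + 1))) (r t) := by
    intro t
    simp only [r, robber, hist, List.getLast?_concat, Option.getD_some]
  have hmem : ∀ t, r t ∈ S := by
    intro t
    induction t with
    | zero => exact hnext_mem _ _ hv₀
    | succ t ih => rw [hr_succ]; exact hnext_mem _ _ ih
  have hlegal : LegalPlay G F r := by
    refine ⟨fun t => ?_, fun t => ?_⟩
    · rw [hr_succ]
      exact hnext_step _ _ (hmem t)
    · rw [hhist]
      cases t with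
      | zero => exact hnext_ne _ _ hv₀
      | succ t => rw [hr_succ]; exact hnext_ne _ _ (hmem t)
  obtain ⟨t, hsurr⟩ := hwin r hlegal
  obtain ⟨w, hw, hw_free⟩ := hfree (F (hist (t + 1))) (r t) (hmem t)
  obtain ⟨i, hi⟩ := hsurr w hw
  exact hw_free i (hhist (t + 1) ▸ hi)

theorem not_copsWin_of_lt_ncard (S : Set V) (hS : S.Nonempty)
    (hstep : ∀ v ∈ S, m < {w ∈ S | stepRel G v w}.ncard)
    (hdeg : ∀ v ∈ S, m < (G.neighborSet v).ncard) :
    ¬ CopsWin G m := by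
  refine not_copsWin_of_evasion S hS (fun c v hv => ?_)
    (fun c v hv => exists_mem_forall_ne_of_lt_ncard c (hdeg v hv))
  obtain ⟨w, ⟨hwS, hvw⟩, hw⟩ := exists_mem_forall_ne_of_lt_ncard c (hstep v hv)
  exact ⟨w, hwS, hvw, hw⟩

end

def ladderReply : Fin 2 × Fin 4 → Fin 3 → Fin 2 × Fin 4
  | (1, 1) => ![(1, 0), (0, 1), (1, 2)]
  | (0, 3) => ![(0, 0), (0, 2), (1, 3)]
  | (1, 3) => ![(0, 0), (0, 3), (1, 2)]
  | _ => ![(0, 0), (0, 2), (1, 1)]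

theorem copsWin_three_ladder : CopsWin (pathGraph 2 □ pathGraph 4) 3 := by
  refine copsWin_of_surround_in_one_round ![(0, 0), (0, 2), (1, 2)]
    fun v hv => ⟨ladderReply v, ?_⟩
  revert v
  decide

theorem not_copsWin_two_ladder : ¬ CopsWin (pathGraph 2 □ pathGraph 4) 2 := by
  refine not_copsWin_of_lt_ncard {p | p.2 = 1 ∨ p.2 = 2} ⟨(0, 1), Or.inl rfl⟩ ?_ ?_ <;>
  · intro v hv
    rw [Set.ncard_eq_toFinset_card']
    revert v
    decide

/-- Let `G` be the `2 × 4` grid graph, i.e. the Cartesian (box)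
product of a path on `2` vertices with a path on `4` vertices.  Then `s(G) = 3`:
two cops do not suffice to surround the robber on `G`, while three cops do. -/
theorem grid_2x4_surrounding_number :
    CopsWin ((SimpleGraph.pathGraph 2).boxProd (SimpleGraph.pathGraph 4)) 3 ∧
      ¬ CopsWin ((SimpleGraph.pathGraph 2).boxProd (SimpleGraph.pathGraph 4)) 2 :=
  ⟨copsWin_three_ladder, not_copsWin_two_ladder⟩
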